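/- Comparison theorem for uniform large deviation upper bounds (Theorem 4.1, upper bound, abstract form): Let (E, ρ) be a separable metric space, I and I' nonempty index sets, Ψ : I → I' a map, (Ω, 𝓕, P) a probability space, and for each t > 0 let L_t^ν (ν ∈ I) and L̄_t^{ν'} (ν' ∈ I') be Borel-measurable maps from Ω to E. Let J : E → [0,∞] have compact level sets. Assume: (i) for every closed set A ⊆ E, limsup_{t→∞} (1/t) · sup_{ν'∈Ψ(I)} log P(L̄_t^{ν'} ∈ A) ≤ −inf_{x∈A} J(x); (ii) for each ν ∈ I there is a jointly measurable g^ν : Ω × [0,∞) → [0,1] such that for every t > 0, ρ(L_t^ν, L̄_t^{Ψ(ν)}) ≤ (1/t) · ∫₀^t g^ν(·, s) ds holds P-almost surely; and (iii) for every real N ≥ 1, sup_{ν∈I} E[exp(N · ∫₀^∞ g^ν(·, s) ds)] < ∞. Then for every closed set A ⊆ E, limsup_{t→∞} (1/t) · sup_{ν∈I} log P(L_t^ν ∈ A) ≤ −inf_{x∈A} J(x). -/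

import Mathlib

open MeasureTheory Filter Set
open scoped ENNReal NNReal

/-- The exponential function on `ℝ≥0∞`, with the convention `exp (+∞) = +∞`. -/
noncomputable def expENN (x : ℝ≥0∞) : ℝ≥0∞ :=
  if x = ⊤ then ⊤ else ENNReal.ofReal (Real.exp x.toReal)

/-!
Fix `c` below `inf_A J`. The level set `{J ≤ c}` is compact and disjoint from the closed set `A`,
so some closed thickening `A^δ` still has `inf J ≥ c`, and the reference family obeys the bound
`-c` on `A^δ`. If `L_t^ν ∈ A` but `L̄_t^{Ψν} ∉ A^δ`, the time average of `g^ν` exceeds `δ`, so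
`∫₀^∞ g^ν ≥ δ t`; by the exponential Chebyshev inequality this has probability at most
`C_N e^{-Nδt}`, uniformly in `ν`. The exponential rate of a sum is the larger of the two rates,
so for `N ≥ c / δ` the rate of `sup_ν P(L_t^ν ∈ A)` is at most `max (-c) (-Nδ) = -c`.
-/

open Topology Metric

lemma expENN_ofReal {x : ℝ} (hx : 0 ≤ x) :
    expENN (ENNReal.ofReal x) = ENNReal.ofReal (Real.exp x) := by
  simp [expENN, ENNReal.toReal_ofReal hx]

lemma expENN_monotone : Monotone expENN := by
  intro x y h
  rcases eq_or_ne y ⊤ with rfl | hy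
  · simp [expENN]
  · have hx : x ≠ ⊤ := ne_top_of_le_ne_top hy h
    simp only [expENN, hx, hy, if_false]
    exact ENNReal.ofReal_le_ofReal (Real.exp_le_exp.2 (ENNReal.toReal_mono hy h))

lemma measurable_expENN : Measurable expENN :=
  Measurable.ite (measurableSet_singleton ⊤) measurable_const
    (ENNReal.measurable_ofReal.comp (Real.measurable_exp.comp ENNReal.measurable_toReal))

lemma ENNReal.log_iSup {ι : Sort*} (f : ι → ℝ≥0∞) : log (⨆ i, f i) = ⨆ i, log (f i) :=
  logOrderIso.map_iSup f

section Deviation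

variable {Ω : Type*} [MeasurableSpace Ω] {μ : Measure Ω}

lemma measure_le_le_exp_neg_mul_lintegral_expENN {X : Ω → ℝ≥0∞} (hX : AEMeasurable X μ) {N s : ℝ}
    (hN : 0 ≤ N) (hs : 0 ≤ s) :
    μ {ω | ENNReal.ofReal s ≤ X ω} ≤
      ENNReal.ofReal (Real.exp (-(N * s))) * ∫⁻ ω, expENN (ENNReal.ofReal N * X ω) ∂μ := by
  set ε := ENNReal.ofReal (Real.exp (N * s)) with hε
  have hsub : {ω | ENNReal.ofReal s ≤ X ω} ⊆ {ω | ε ≤ expENN (ENNReal.ofReal N * X ω)} := by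
    intro ω hω
    rw [mem_ofPred_eq, hε, ← expENN_ofReal (by positivity), ENNReal.ofReal_mul hN]
    exact expENN_monotone (mul_le_mul_right hω _)
  have markov := mul_meas_ge_le_lintegral₀
    (measurable_expENN.comp_aemeasurable (hX.const_mul (ENNReal.ofReal N))) ε
  calc μ {ω | ENNReal.ofReal s ≤ X ω}
      = ENNReal.ofReal (Real.exp (-(N * s))) * (ε * μ {ω | ENNReal.ofReal s ≤ X ω}) := by
        rw [← mul_assoc, ← ENNReal.ofReal_mul (Real.exp_nonneg _), ← Real.exp_add]
        simp
    _ ≤ ENNReal.ofReal (Real.exp (-(N * s))) * ∫⁻ ω, expENN (ENNReal.ofReal N * X ω) ∂μ := by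
        gcongr
        exact (mul_le_mul_right (measure_mono hsub) ε).trans markov

variable {E : Type*} [PseudoMetricSpace E] {L L' : Ω → E}

lemma measure_mem_le_add_of_dist_le {Y : Ω → ℝ≥0∞} (A : Set E) (δ : ℝ)
    (h : ∀ᵐ ω ∂μ, ENNReal.ofReal (dist (L ω) (L' ω)) ≤ Y ω) :
    μ {ω | L ω ∈ A} ≤ μ {ω | L' ω ∈ cthickening δ A} + μ {ω | ENNReal.ofReal δ ≤ Y ω} := by
  refine (measure_mono_ae ?_).trans (measure_union_le _ _)
  filter_upwards [h] with ω hω hA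
  rcases le_or_gt (dist (L ω) (L' ω)) δ with hd | hd
  · exact Or.inl (mem_cthickening_of_dist_le _ _ δ A hA (by rwa [dist_comm]))
  · exact Or.inr ((ENNReal.ofReal_le_ofReal hd.le).trans hω)

lemma measure_mem_le_add_exp_of_dist_le_average {g : Ω → ℝ → ℝ}
    (hg : Measurable (Function.uncurry g)) (A : Set E) {t δ N : ℝ} (ht : 0 < t) (hδ : 0 ≤ δ)
    (hN : 0 ≤ N)
    (h : ∀ᵐ ω ∂μ, ENNReal.ofReal (dist (L ω) (L' ω)) ≤
      (ENNReal.ofReal t)⁻¹ * ∫⁻ s in Icc 0 t, ENNReal.ofReal (g ω s)) :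
    μ {ω | L ω ∈ A} ≤ μ {ω | L' ω ∈ cthickening δ A} +
      ENNReal.ofReal (Real.exp (-(N * (δ * t)))) *
        ∫⁻ ω, expENN (ENNReal.ofReal N * ∫⁻ s in Ici 0, ENNReal.ofReal (g ω s)) ∂μ := by
  set X : Ω → ℝ≥0∞ := fun ω => ∫⁻ s in Ici 0, ENNReal.ofReal (g ω s)
  have hX : Measurable X := (ENNReal.measurable_ofReal.comp hg).lintegral_prod_right'
  have hsub : {ω | ENNReal.ofReal δ ≤ (ENNReal.ofReal t)⁻¹ *
      ∫⁻ s in Icc 0 t, ENNReal.ofReal (g ω s)} ⊆ {ω | ENNReal.ofReal (δ * t) ≤ X ω} := by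
    intro ω hω
    rw [mem_ofPred_eq, ENNReal.ofReal_mul hδ, ← ENNReal.le_div_iff_mul_le
      (Or.inl (ENNReal.ofReal_pos.2 ht).ne') (Or.inl ENNReal.ofReal_ne_top), ENNReal.div_eq_inv_mul]
    exact hω.trans (mul_le_mul_right (lintegral_mono_set Icc_subset_Ici_self) _)
  calc μ {ω | L ω ∈ A}
      ≤ μ {ω | L' ω ∈ cthickening δ A} + μ {ω | ENNReal.ofReal (δ * t) ≤ X ω} :=
        (measure_mem_le_add_of_dist_le A δ h).trans (add_le_add_right (measure_mono hsub) _)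
    _ ≤ _ := add_le_add_right
        (measure_le_le_exp_neg_mul_lintegral_expENN hX.aemeasurable hN (by positivity)) _

end Deviation

/-- Continuous-time analogue of `expGrowthSup`. -/
noncomputable def expGrowthSupReal (u : ℝ → ℝ≥0∞) : EReal :=
  limsup (fun t : ℝ => ((1 / t : ℝ) : EReal) * ENNReal.log (u t)) atTop

section ExpGrowthSupReal

variable {u v : ℝ → ℝ≥0∞}

lemma expGrowthSupReal_eventually_monotone (h : u ≤ᶠ[atTop] v) :
    expGrowthSupReal u ≤ expGrowthSupReal v := by
  refine limsup_le_limsup ?_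
  filter_upwards [h, eventually_gt_atTop 0] with t huv ht
  exact mul_le_mul_of_nonneg_left (ENNReal.log_monotone huv) (by exact_mod_cast (by positivity))

lemma tendsto_inv_mul_coe_atTop (r : ℝ) :
    Tendsto (fun t : ℝ => ((1 / t : ℝ) : EReal) * (r : EReal)) atTop (𝓝 0) := by
  simp only [← EReal.coe_mul]
  exact EReal.tendsto_coe.2 (by simpa using tendsto_inv_atTop_zero.mul_const r)

lemma expGrowthSupReal_add_le :
    expGrowthSupReal (u + v) ≤ max (expGrowthSupReal u) (expGrowthSupReal v) := by
  set w : ℝ → EReal := fun t => ((1 / t : ℝ) : EReal) * (Real.log 2 : EReal)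
  set m : ℝ → EReal := fun t => max (((1 / t : ℝ) : EReal) * ENNReal.log (u t))
    (((1 / t : ℝ) : EReal) * ENNReal.log (v t))
  have hw : limsup w atTop = 0 := (tendsto_inv_mul_coe_atTop _).limsup_eq
  have hlog2 : ENNReal.log 2 = (Real.log 2 : EReal) := by
    simpa using ENNReal.log_ofReal_of_pos (x := 2) two_pos
  -- `u + v ≤ 2 max u v`, and the factor `2` is invisible at exponential scale
  have hbound : ∀ᶠ t in atTop,
      ((1 / t : ℝ) : EReal) * ENNReal.log (u t + v t) ≤ w t + m t := by
    filter_upwards [eventually_gt_atTop 0] with t ht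
    have h0 : (0 : EReal) ≤ ((1 / t : ℝ) : EReal) := by exact_mod_cast (by positivity)
    calc ((1 / t : ℝ) : EReal) * ENNReal.log (u t + v t)
        ≤ ((1 / t : ℝ) : EReal) * ENNReal.log (2 * max (u t) (v t)) := by
          refine mul_le_mul_of_nonneg_left (ENNReal.log_monotone ?_) h0
          rw [two_mul]
          exact add_le_add (le_max_left _ _) (le_max_right _ _)
      _ = ((1 / t : ℝ) : EReal) *
            ((Real.log 2 : EReal) + max (ENNReal.log (u t)) (ENNReal.log (v t))) := by
          rw [ENNReal.log_mul_add, ENNReal.log_monotone.map_max, hlog2]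
      _ = w t + m t := by
          rw [EReal.left_distrib_of_nonneg_of_ne_top h0 (EReal.coe_ne_top _),
            (monotone_mul_left_of_nonneg h0).map_max]
  calc expGrowthSupReal (u + v) ≤ limsup (w + m) atTop := limsup_le_limsup hbound
    _ ≤ limsup w atTop + limsup m atTop := EReal.limsup_add_le (by simp [hw]) (by simp [hw])
    _ = max (expGrowthSupReal u) (expGrowthSupReal v) := by rw [hw, zero_add, limsup_max]; rfl

lemma expGrowthSupReal_ofReal_mul_exp {K : ℝ} (hK : 0 < K) (r : ℝ) :
    expGrowthSupReal (fun t => ENNReal.ofReal (K * Real.exp (-(r * t)))) = (-r : ℝ) := by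
  have hreal : Tendsto (fun t : ℝ => Real.log K / t - r) atTop (𝓝 (-r)) := by
    simpa using (tendsto_const_nhds.div_atTop tendsto_id).sub_const r
  refine Tendsto.limsup_eq ((EReal.tendsto_coe.2 hreal).congr' ?_)
  filter_upwards [eventually_gt_atTop 0] with t ht
  rw [ENNReal.log_ofReal_of_pos (by positivity), Real.log_mul hK.ne' (Real.exp_ne_zero _),
    Real.log_exp, ← EReal.coe_mul]
  congr 1
  field_simp
  ring

end ExpGrowthSupReal

lemma exists_pos_le_iInf_cthickening {E : Type*} [PseudoMetricSpace E] {J : E → ℝ≥0∞}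
    (hJ : ∀ r : ℝ≥0, IsCompact {x | J x ≤ r}) {A : Set E} (hA : IsClosed A) {c : ℝ}
    (hc : (c : EReal) < ⨅ x ∈ A, (J x : EReal)) :
    ∃ δ > 0, (c : EReal) ≤ ⨅ x ∈ cthickening δ A, (J x : EReal) := by
  rcases lt_or_ge c 0 with hc0 | hc0
  · exact ⟨1, one_pos, le_iInf₂ fun x _ =>
      (EReal.coe_lt_coe hc0).le.trans (EReal.coe_ennreal_nonneg _)⟩
  have hcoe : ∀ x, (c : EReal) < J x ↔ (c.toNNReal : ℝ≥0∞) < J x := fun x => by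
    rw [← EReal.coe_ennreal_lt_coe_ennreal_iff, EReal.coe_nnreal_eq_coe_real,
      Real.coe_toNNReal _ hc0]
  have hdisj : Disjoint {x | J x ≤ c.toNNReal} A := disjoint_left.2 fun x hxK hxA =>
    ((hcoe x).1 (hc.trans_le (iInf₂_le x hxA))).not_ge hxK
  obtain ⟨δ, hδ, hdisj'⟩ := hdisj.exists_cthickenings (hJ _) hA
  refine ⟨δ, hδ, le_iInf₂ fun x hx => ((hcoe x).2 (lt_of_not_ge fun hxK =>
    disjoint_left.1 hdisj' (self_subset_cthickening _ hxK) hx)).le⟩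

theorem comparison_theorem_upper_general
    {E : Type*} [MetricSpace E]
    {I I' : Type*} (Ψ : I → I')
    {Ω : Type*} [MeasurableSpace Ω] (P : Measure Ω)
    (L : I → ℝ → Ω → E) (Lbar : I' → ℝ → Ω → E)
    (J : E → ℝ≥0∞) (hJ : ∀ r : NNReal, IsCompact {x : E | J x ≤ r})
    -- (i) uniform upper bound for the reference family, over `Ψ(I)`
    (hupper : ∀ A : Set E, IsClosed A →
      limsup (fun t : ℝ =>
          ((1 / t : ℝ) : EReal) *
            ⨆ ν' ∈ Set.range Ψ, ENNReal.log (P {ω | Lbar ν' t ω ∈ A})) atTop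
        ≤ -(⨅ x ∈ A, (J x : EReal)))
    -- (ii)+(iii) domination by a process with uniform exponential moments
    (hdom : ∃ g : I → Ω → ℝ → ℝ,
      (∀ ν : I, Measurable (Function.uncurry (g ν))) ∧
      (∀ (ν : I) (ω : Ω) (s : ℝ), g ν ω s ∈ Set.Icc (0 : ℝ) 1) ∧
      (∀ ν : I, ∀ t > (0 : ℝ), ∀ᵐ ω ∂P,
        ENNReal.ofReal (dist (L ν t ω) (Lbar (Ψ ν) t ω)) ≤
          (ENNReal.ofReal t)⁻¹ *
            ∫⁻ s in Set.Icc (0 : ℝ) t, ENNReal.ofReal (g ν ω s)) ∧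
      (∀ N : ℝ, 1 ≤ N →
        (⨆ ν : I, ∫⁻ ω, expENN (ENNReal.ofReal N *
            ∫⁻ s in Set.Ici (0 : ℝ), ENNReal.ofReal (g ν ω s)) ∂P) < ⊤)) :
    ∀ A : Set E, IsClosed A →
      limsup (fun t : ℝ =>
          ((1 / t : ℝ) : EReal) *
            ⨆ ν : I, ENNReal.log (P {ω | L ν t ω ∈ A})) atTop
        ≤ -(⨅ x ∈ A, (J x : EReal)) := by
  obtain ⟨g, hg_meas, -, hg_dom, hg_exp⟩ := hdom
  intro A hA
  refine EReal.le_neg_of_le_neg (EReal.ge_of_forall_gt_iff_ge.1 fun c hc => ?_)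
  refine EReal.le_neg_of_le_neg ?_
  obtain ⟨δ, hδ, hcB⟩ := exists_pos_le_iInf_cthickening hJ hA hc
  set N := max 1 (c / δ)
  have hN1 : 1 ≤ N := le_max_left _ _
  have hNδ : c ≤ N * δ := (div_le_iff₀ hδ).1 (le_max_right _ _)
  set C := ⨆ ν, ∫⁻ ω, expENN (ENNReal.ofReal N *
    ∫⁻ s in Ici 0, ENNReal.ofReal (g ν ω s)) ∂P
  -- `C` may vanish; this positive real bound has a finite logarithm
  have hC : C ≤ ENNReal.ofReal (C.toReal + 1) :=
    (ENNReal.le_ofReal_iff_toReal_le (hg_exp N hN1).ne (by positivity)).2 (by linarith)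
  have hcomp : ∀ t > 0, ⨆ ν, P {ω | L ν t ω ∈ A} ≤
      (⨆ ν' ∈ range Ψ, P {ω | Lbar ν' t ω ∈ cthickening δ A}) +
        ENNReal.ofReal ((C.toReal + 1) * Real.exp (-(N * δ * t))) := by
    intro t ht
    refine iSup_le fun ν => (measure_mem_le_add_exp_of_dist_le_average (hg_meas ν) A ht hδ.le
      (zero_le_one.trans hN1) (hg_dom ν t ht)).trans (add_le_add ?_ ?_)
    · exact le_biSup (fun ν' => P {ω | Lbar ν' t ω ∈ cthickening δ A}) (mem_range_self ν)
    · rw [mul_comm, ENNReal.ofReal_mul (by positivity), mul_assoc]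
      exact mul_le_mul_left ((le_iSup _ ν).trans hC) _
  have hB := (hupper _ isClosed_cthickening).trans (EReal.neg_le_neg_iff.2 hcB)
  simp only [← ENNReal.log_iSup] at hB ⊢
  calc expGrowthSupReal (fun t => ⨆ ν, P {ω | L ν t ω ∈ A})
      ≤ max (expGrowthSupReal fun t => ⨆ ν' ∈ range Ψ, P {ω | Lbar ν' t ω ∈ cthickening δ A})
          (expGrowthSupReal fun t => ENNReal.ofReal ((C.toReal + 1) * Real.exp (-(N * δ * t)))) :=
        (expGrowthSupReal_eventually_monotone ((eventually_gt_atTop 0).mono hcomp)).trans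
          expGrowthSupReal_add_le
    _ ≤ -c := by
        rw [expGrowthSupReal_ofReal_mul_exp (by positivity)]
        exact max_le hB (by exact_mod_cast neg_le_neg hNδ)

/-- **Comparison theorem for uniform LDP, upper bound** (Theorem 4.1 of the paper,
abstract form). If the reference family `Lbar` (indexed over `Ψ(I)`) satisfies the
uniform large deviation upper bound with rate function `J`, and `ρ(L_t^ν, L̄_t^{Ψν})`
is dominated by the time average of a `[0,1]`-valued process `g^ν` having uniformly
finite exponential moments, then `L` satisfies the same uniform upper bound. -/
theorem comparison_theorem_upper
    {E : Type*} [MetricSpace E] [TopologicalSpace.SeparableSpace E]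
    [MeasurableSpace E] [BorelSpace E]
    {I I' : Type*} [Nonempty I] [Nonempty I'] (Ψ : I → I')
    {Ω : Type*} [MeasurableSpace Ω] (P : Measure Ω) [IsProbabilityMeasure P]
    (L : I → ℝ → Ω → E) (Lbar : I' → ℝ → Ω → E)
    (hL : ∀ ν : I, ∀ t > (0 : ℝ), Measurable (L ν t))
    (hLbar : ∀ ν' : I', ∀ t > (0 : ℝ), Measurable (Lbar ν' t))
    (J : E → ℝ≥0∞) (hJ : ∀ r : NNReal, IsCompact {x : E | J x ≤ r})
    -- (i) uniform upper bound for the reference family, over `Ψ(I)`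
    (hupper : ∀ A : Set E, IsClosed A →
      limsup (fun t : ℝ =>
          ((1 / t : ℝ) : EReal) *
            ⨆ ν' ∈ Set.range Ψ, ENNReal.log (P {ω | Lbar ν' t ω ∈ A})) atTop
        ≤ -(⨅ x ∈ A, (J x : EReal)))
    -- (ii)+(iii) domination by a process with uniform exponential moments
    (hdom : ∃ g : I → Ω → ℝ → ℝ,
      (∀ ν : I, Measurable (Function.uncurry (g ν))) ∧
      (∀ (ν : I) (ω : Ω) (s : ℝ), g ν ω s ∈ Set.Icc (0 : ℝ) 1) ∧
      (∀ ν : I, ∀ t > (0 : ℝ), ∀ᵐ ω ∂P,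
        ENNReal.ofReal (dist (L ν t ω) (Lbar (Ψ ν) t ω)) ≤
          (ENNReal.ofReal t)⁻¹ *
            ∫⁻ s in Set.Icc (0 : ℝ) t, ENNReal.ofReal (g ν ω s)) ∧
      (∀ N : ℝ, 1 ≤ N →
        (⨆ ν : I, ∫⁻ ω, expENN (ENNReal.ofReal N *
            ∫⁻ s in Set.Ici (0 : ℝ), ENNReal.ofReal (g ν ω s)) ∂P) < ⊤)) :
    ∀ A : Set E, IsClosed A →
      limsup (fun t : ℝ =>
          ((1 / t : ℝ) : EReal) *
            ⨆ ν : I, ENNReal.log (P {ω | L ν t ω ∈ A})) atTop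
        ≤ -(⨅ x ∈ A, (J x : EReal)) :=
  comparison_theorem_upper_general Ψ P L Lbar J hJ hupper hdom
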